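/- arXiv:math/0511142 — 3 statements merged into one kernel-verified Lean document; each statement's English description precedes it below -/
import Mathlib

section
/- Let V be a three-dimensional complex vector space equipped with a hermitian inner product H, and let W be a real four-dimensional real subspace of V (viewed as a 6-dimensional real vector space). Then there exists a complex line L ⊆ V such that for all v ∈ L and w ∈ W, |H(v,w)| ≤ cos(π/4)·‖v‖·‖w‖. -/
/-!
Take a real-orthonormal pair `u₁, u₂` in the real orthogonal complement of `W`, ordered so that
`Im ⟪u₁, u₂⟫ ≤ 0`, and let `L = ℂ (u₁ + i u₂)`. Then `‖u₁ + i u₂‖² = 2 - 2 Im ⟪u₁, u₂⟫ ≥ 2`. For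
`w ∈ W` the inner products `⟪u_j, w⟫` are purely imaginary, so `|⟪u₁ + i u₂, w⟫|² =
Im ⟪u₁, w⟫² + Im ⟪u₂, w⟫²`, which Bessel's inequality for the real-orthonormal pair `i u₁, i u₂`
bounds by `‖w‖² ≤ ‖u₁ + i u₂‖² ‖w‖² / 2`.
-/

open Complex Module
open scoped InnerProductSpace

theorem norm_inner_le_of_mem_span_singleton {𝕜 E : Type*} [RCLike 𝕜] [SeminormedAddCommGroup E]
    [InnerProductSpace 𝕜 E] {v x w : E} {k : ℝ} (hx : x ∈ 𝕜 ∙ v)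
    (hv : ‖⟪v, w⟫_𝕜‖ ≤ k * ‖v‖ * ‖w‖) : ‖⟪x, w⟫_𝕜‖ ≤ k * ‖x‖ * ‖w‖ := by
  obtain ⟨z, rfl⟩ := Submodule.mem_span_singleton.mp hx
  rw [inner_smul_left, norm_mul, RCLike.norm_conj, norm_smul]
  calc ‖z‖ * ‖⟪v, w⟫_𝕜‖ ≤ ‖z‖ * (k * ‖v‖ * ‖w‖) := by gcongr
    _ = k * (‖z‖ * ‖v‖) * ‖w‖ := by ring

section

variable {V : Type*} [NormedAddCommGroup V] [InnerProductSpace ℂ V]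

theorem norm_add_I_smul_sq (u₁ u₂ : V) :
    ‖u₁ + I • u₂‖ ^ 2 = ‖u₁‖ ^ 2 + ‖u₂‖ ^ 2 - 2 * (⟪u₁, u₂⟫_ℂ).im := by
  rw [norm_add_sq (𝕜 := ℂ), inner_smul_right, RCLike.re_to_complex, I_mul_re, norm_smul, norm_I,
    one_mul]
  ring

theorem re_inner_I_smul_left (u w : V) : (⟪I • u, w⟫_ℂ).re = (⟪u, w⟫_ℂ).im := by
  simp

theorem inner_I_smul_I_smul (u w : V) : ⟪I • u, I • w⟫_ℂ = ⟪u, w⟫_ℂ := by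
  rw [inner_smul_left, inner_smul_right, ← mul_assoc, conj_I, neg_mul, I_mul_I, neg_neg, one_mul]

theorem sq_im_inner_add_sq_im_inner_le {u₁ u₂ : V} (h₁ : ‖u₁‖ = 1) (h₂ : ‖u₂‖ = 1)
    (h₁₂ : (⟪u₁, u₂⟫_ℂ).re = 0) (w : V) :
    (⟪u₁, w⟫_ℂ).im ^ 2 + (⟪u₂, w⟫_ℂ).im ^ 2 ≤ ‖w‖ ^ 2 := by
  let := InnerProductSpace.complexToReal (G := V)
  have h₂₁ : (⟪u₂, u₁⟫_ℂ).re = 0 := by rw [← inner_conj_symm, conj_re, h₁₂]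
  have hon : Orthonormal ℝ ![I • u₁, I • u₂] := by
    rw [orthonormal_iff_ite]
    intro i j
    fin_cases i <;> fin_cases j <;>
      simp [real_inner_eq_re_inner, inner_I_smul_I_smul, h₁₂, h₂₁, norm_smul, h₁, h₂]
  simpa [Fin.sum_univ_two, real_inner_eq_re_inner, re_inner_I_smul_left]
    using hon.sum_inner_products_le (s := Finset.univ) w

theorem norm_inner_add_I_smul_le {u₁ u₂ w : V} (h₁ : ‖u₁‖ = 1) (h₂ : ‖u₂‖ = 1)
    (h₁₂ : (⟪u₁, u₂⟫_ℂ).re = 0) (hw₁ : (⟪u₁, w⟫_ℂ).re = 0) (hw₂ : (⟪u₂, w⟫_ℂ).re = 0) :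
    ‖⟪u₁ + I • u₂, w⟫_ℂ‖ ≤ ‖w‖ := by
  have hsq : ‖⟪u₁ + I • u₂, w⟫_ℂ‖ ^ 2 = (⟪u₁, w⟫_ℂ).im ^ 2 + (⟪u₂, w⟫_ℂ).im ^ 2 := by
    rw [inner_add_left, inner_smul_left, conj_I, Complex.sq_norm, normSq_apply]
    simp only [neg_mul, add_re, hw₁, neg_re, mul_re, I_re, hw₂, mul_zero, I_im, one_mul, zero_sub,
      neg_neg, zero_add, add_im, neg_im, mul_im, zero_mul, add_zero, neg_zero]
    ring
  rw [← pow_le_pow_iff_left₀ (norm_nonneg _) (norm_nonneg _) two_ne_zero, hsq]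
  exact sq_im_inner_add_sq_im_inner_le h₁ h₂ h₁₂ w

theorem exists_ne_zero_norm_inner_le_cos_pi_div_four {u₁ u₂ : V} (h₁ : ‖u₁‖ = 1) (h₂ : ‖u₂‖ = 1)
    (h₁₂ : (⟪u₁, u₂⟫_ℂ).re = 0) :
    ∃ v : V, v ≠ 0 ∧ ∀ w, (⟪u₁, w⟫_ℂ).re = 0 → (⟪u₂, w⟫_ℂ).re = 0 →
      ‖⟪v, w⟫_ℂ‖ ≤ Real.cos (Real.pi / 4) * ‖v‖ * ‖w‖ := by
  wlog him : (⟪u₁, u₂⟫_ℂ).im ≤ 0 generalizing u₁ u₂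
  · obtain ⟨v, hv, hvw⟩ := this h₂ h₁ (by rw [← inner_conj_symm, conj_re, h₁₂])
      (by rw [← inner_conj_symm, conj_im]; linarith)
    exact ⟨v, hv, fun w hw₁ hw₂ => hvw w hw₂ hw₁⟩
  have hv : 2 ≤ ‖u₁ + I • u₂‖ ^ 2 := by rw [norm_add_I_smul_sq, h₁, h₂]; linarith
  refine ⟨u₁ + I • u₂, ?_, fun w hw₁ hw₂ => ?_⟩
  · intro h
    rw [h, norm_zero] at hv
    norm_num at hv
  have hcos : 1 ≤ Real.cos (Real.pi / 4) * ‖u₁ + I • u₂‖ := by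
    have hnorm : √2 ≤ ‖u₁ + I • u₂‖ := (Real.sqrt_le_sqrt hv).trans_eq (Real.sqrt_sq (norm_nonneg _))
    rw [Real.cos_pi_div_four]
    calc (1 : ℝ) = √2 / 2 * √2 := by rw [div_mul_eq_mul_div, Real.mul_self_sqrt zero_le_two]; norm_num
      _ ≤ √2 / 2 * ‖u₁ + I • u₂‖ := by gcongr
  calc ‖⟪u₁ + I • u₂, w⟫_ℂ‖ ≤ ‖w‖ := norm_inner_add_I_smul_le h₁ h₂ h₁₂ hw₁ hw₂
    _ ≤ Real.cos (Real.pi / 4) * ‖u₁ + I • u₂‖ * ‖w‖ := le_mul_of_one_le_left (norm_nonneg w) hcos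

end

/-- In a 3-dimensional complex hermitian inner product space `V`,
for every real 4-dimensional real subspace `W` there exists a complex line `L`
such that `|⟪v,w⟫| ≤ cos(π/4)·‖v‖·‖w‖` for all `v ∈ L`, `w ∈ W`. -/
theorem stmt_0 (V : Type*) [NormedAddCommGroup V] [InnerProductSpace ℂ V]
    (hV : Module.finrank ℂ V = 3)
    (W : Submodule ℝ V) (hW : Module.finrank ℝ W = 4) :
    ∃ L : Submodule ℂ V, Module.finrank ℂ L = 1 ∧
      ∀ v ∈ L, ∀ w ∈ W,
        ‖(inner ℂ v w : ℂ)‖ ≤ Real.cos (Real.pi / 4) * ‖v‖ * ‖w‖ := by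
  let := InnerProductSpace.complexToReal (G := V)
  have : FiniteDimensional ℂ V := Module.finite_of_finrank_eq_succ hV
  have hWperp : finrank ℝ Wᗮ = 2 := by
    have := W.finrank_add_finrank_orthogonal
    rw [finrank_real_of_complex, hV, hW] at this
    omega
  let b := (stdOrthonormalBasis ℝ Wᗮ).reindex (finCongr hWperp)
  have hu : Orthonormal ℝ (fun i => (b i : V)) := b.orthonormal.comp_linearIsometry Wᗮ.subtypeₗᵢ
  have hperp : ∀ i, ∀ w ∈ W, (⟪(b i : V), w⟫_ℂ).re = 0 := fun i w hw =>
    (real_inner_eq_re_inner ℂ _ _).symm.trans (Submodule.inner_left_of_mem_orthogonal hw (b i).2)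
  obtain ⟨v, hv, hvW⟩ := exists_ne_zero_norm_inner_le_cos_pi_div_four (hu.1 0) (hu.1 1)
    ((real_inner_eq_re_inner ℂ _ _).symm.trans (hu.2 (by decide)))
  exact ⟨ℂ ∙ v, finrank_span_singleton hv, fun x hx w hw =>
    norm_inner_le_of_mem_span_singleton hx (hvW w (hperp 0 w hw) (hperp 1 w hw))⟩
end

section
/- Let (α_n) be a sequence of holomorphic functions on a disc around 0 converging uniformly to 0, with α_n(0) ≠ 0 for every n. Define φ_n(t) = t + α_n(t)·α_n'(t). Then for all large n there exists s_n with φ_n(s_n) = 0, lim s_n = 0, and α_n(s_n) ≠ 0; moreover α_n'(s_n) = −s_n / α_n(s_n) for such s_n. -/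
open Metric Filter
open scoped NNReal

/-- Let `α n` be holomorphic on a disc around `0`, converging
locally uniformly to `0`, with `α n 0 ≠ 0` for every `n`.  Setting
`φ n t = t + α n t * (α n)' t`, for all large `n` there exist zeros `s n` of
`φ n` with `s n → 0`, `α n (s n) ≠ 0` and `(α n)' (s n) = - s n / α n (s n)`. -/
theorem stmt_7 (r : ℝ) (hr : 0 < r) (α : ℕ → ℂ → ℂ)
    (hα : ∀ n, DifferentiableOn ℂ (α n) (ball (0 : ℂ) r))
    (hconv : TendstoLocallyUniformlyOn α (fun _ => 0) atTop (ball (0 : ℂ) r))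
    (h0 : ∀ n, α n 0 ≠ 0) :
    ∃ (N : ℕ) (s : ℕ → ℂ),
      (∀ n ≥ N, s n ∈ ball (0 : ℂ) r ∧
        s n + α n (s n) * deriv (α n) (s n) = 0 ∧
        α n (s n) ≠ 0 ∧
        deriv (α n) (s n) = - s n / α n (s n)) ∧
      Tendsto s atTop (nhds 0) := by
  classical
  set ρ : ℝ := r / 2 with hρdef
  have hρ : 0 < ρ := by positivity
  set K : Set ℂ := closedBall (0 : ℂ) ρ with hKdef
  have hKsub : K ⊆ ball (0 : ℂ) r := by
    apply closedBall_subset_ball; rw [hρdef]; linarith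
  have hKc : IsCompact K := isCompact_closedBall _ _
  -- deriv of α n is differentiable
  have hαd : ∀ n, DifferentiableOn ℂ (deriv (α n)) (ball (0 : ℂ) r) := fun n =>
    (((hα n).analyticOnNhd isOpen_ball).deriv).differentiableOn
  set β : ℕ → ℂ → ℂ := fun n t => α n t * deriv (α n) t with hβdef
  have hβd : ∀ n, DifferentiableOn ℂ (β n) (ball (0 : ℂ) r) := fun n =>
    (hα n).mul (hαd n)
  -- derivatives converge locally uniformly to 0
  have hαdconv : TendstoLocallyUniformlyOn (fun n => deriv (α n)) (fun _ => 0) atTop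
      (ball (0 : ℂ) r) := by
    have := hconv.deriv (Eventually.of_forall hα) isOpen_ball
    have h : (deriv fun _ : ℂ => (0 : ℂ)) = fun _ => (0 : ℂ) := by
      funext x; simp
    rw [h] at this
    exact this
  -- β converges locally uniformly to 0
  have hβconv : TendstoLocallyUniformlyOn β (fun _ => 0) atTop (ball (0 : ℂ) r) := by
    rw [tendstoLocallyUniformlyOn_iff_forall_isCompact isOpen_ball]
    intro K' hK'U hK'
    have A := (tendstoLocallyUniformlyOn_iff_forall_isCompact isOpen_ball).1 hconv K' hK'U hK'
    have B := (tendstoLocallyUniformlyOn_iff_forall_isCompact isOpen_ball).1 hαdconv K' hK'U hK'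
    rw [Metric.tendstoUniformlyOn_iff] at A B ⊢
    intro ε hε
    filter_upwards [A ε hε, B 1 one_pos] with n hA hB x hx
    have h1 := hA x hx
    have h2 := hB x hx
    simp only [dist_zero_left] at h1 h2 ⊢
    calc ‖β n x‖ = ‖α n x‖ * ‖deriv (α n) x‖ := norm_mul _ _
      _ ≤ ‖α n x‖ * 1 := by
          exact mul_le_mul_of_nonneg_left h2.le (norm_nonneg _)
      _ < ε := by rw [mul_one]; exact h1
  -- deriv of β converges locally uniformly to 0
  have hβ'conv : TendstoLocallyUniformlyOn (fun n => deriv (β n)) (fun _ => 0) atTop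
      (ball (0 : ℂ) r) := by
    have := hβconv.deriv (Eventually.of_forall hβd) isOpen_ball
    have h : (deriv fun _ : ℂ => (0 : ℂ)) = fun _ => (0 : ℂ) := by
      funext x; simp
    rw [h] at this
    exact this
  -- uniform smallness on K
  have hU1 : ∀ ε > (0:ℝ), ∀ᶠ n in atTop, ∀ x ∈ K, ‖β n x‖ < ε := by
    intro ε hε
    have A := (tendstoLocallyUniformlyOn_iff_forall_isCompact isOpen_ball).1 hβconv K hKsub hKc
    rw [Metric.tendstoUniformlyOn_iff] at A
    filter_upwards [A ε hε] with n hn x hx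
    have := hn x hx; simpa [dist_zero_left] using this
  have hU2 : ∀ᶠ n in atTop, ∀ x ∈ K, ‖deriv (β n) x‖ < 1/2 := by
    have A := (tendstoLocallyUniformlyOn_iff_forall_isCompact isOpen_ball).1 hβ'conv K hKsub hKc
    rw [Metric.tendstoUniformlyOn_iff] at A
    filter_upwards [A (1/2) (by norm_num)] with n hn x hx
    have := hn x hx; simpa [dist_zero_left] using this
  obtain ⟨N, hN⟩ := eventually_atTop.1 ((hU1 ρ hρ).and hU2)
  -- for each n ≥ N find a fixed point of F = -β n in K
  have key : ∀ n, ∃ y, y ∈ K ∧ (n ≥ N → y + β n y = 0) := by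
    intro n
    by_cases hn : n ≥ N
    · obtain ⟨h1, h2⟩ := hN n hn
      set F : ℂ → ℂ := fun t => -(β n t) with hF
      have hmaps : Set.MapsTo F K K := by
        intro x hx
        have : ‖F x‖ < ρ := by simpa [hF] using h1 x hx
        simpa [hKdef, mem_closedBall, dist_zero_right] using this.le
      have hdiff : ∀ x ∈ K, DifferentiableAt ℂ (β n) x := fun x hx =>
        (hβd n).differentiableAt (isOpen_ball.mem_nhds (hKsub hx))
      have hFdiff : ∀ x ∈ K, DifferentiableAt ℂ F x := fun x hx => (hdiff x hx).neg
      have hFderiv : ∀ x ∈ K, ‖deriv F x‖₊ ≤ (1/2 : ℝ≥0) := by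
        intro x hx
        have hd : deriv F x = -(deriv (β n) x) := by
          rw [hF]; exact deriv.neg
        have : ‖deriv F x‖ ≤ 1/2 := by
          rw [hd, norm_neg]; exact (h2 x hx).le
        rw [← NNReal.coe_le_coe]
        simpa [← coe_nnnorm] using this
      have hlip : LipschitzOnWith (1/2 : ℝ≥0) F K :=
        Convex.lipschitzOnWith_of_nnnorm_deriv_le hFdiff hFderiv (convex_closedBall _ _)
      have hcontr : ContractingWith (1/2 : ℝ≥0) (hmaps.restrict F K K) :=
        ⟨by rw [← NNReal.coe_lt_coe]; norm_num, hlip.mapsToRestrict hmaps⟩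
      have h0K : (0:ℂ) ∈ K := by simp [hKdef, hρ.le]
      obtain ⟨y, hyK, hyfix, -, -⟩ :=
        ContractingWith.exists_fixedPoint' hKc.isComplete hmaps hcontr h0K (edist_ne_top _ _)
      refine ⟨y, hyK, fun _ => ?_⟩
      have : F y = y := hyfix
      rw [hF] at this
      linear_combination -this
    · exact ⟨0, by simp [hKdef, hρ.le], fun h => absurd h hn⟩
  choose s hsK hseq using key
  refine ⟨N, s, fun n hn => ?_, ?_⟩
  · have hmem : s n ∈ ball (0:ℂ) r := hKsub (hsK n)
    have heq : s n + α n (s n) * deriv (α n) (s n) = 0 := hseq n hn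
    have hne : α n (s n) ≠ 0 := by
      intro h
      have hs0 : s n = 0 := by
        have := heq; rw [h] at this; simpa using this
      rw [hs0] at h
      exact h0 n h
    refine ⟨hmem, heq, hne, ?_⟩
    field_simp
    linear_combination heq
  · rw [Metric.tendsto_nhds]
    intro ε hε
    filter_upwards [hU1 ε hε, eventually_ge_atTop N] with n h1 hn
    have heq : s n + β n (s n) = 0 := hseq n hn
    have : s n = -(β n (s n)) := by linear_combination heq
    rw [dist_zero_right, this, norm_neg]
    exact h1 (s n) (hsK n)
end

section
/- With notation as above, setting γ_n(t) = (t, α_n(t), β_n(t)) and γ̂_n(t) = (t/α_n(t), α_n(t), β_n(t)) (the lift under the blow-up map π(x₁,x₂,x₃) = (x₁x₂, x₂, x₃)), and choosing s_n with s_n + α_n(s_n)α_n'(s_n) = 0 and s_n → 0: one has γ̂_n(s_n) → (0,0,0), lim ‖γ_n'(s_n)‖ = 1, and lim ‖γ̂_n'(s_n)‖ = +∞. -/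
open Metric Filter

/-- With `γ n t = (t, α n t, β n t)` and its lift
`γ̂ n t = (t / α n t, α n t, β n t)` under the blow-up chart
`π(x₁,x₂,x₃) = (x₁x₂, x₂, x₃)`, and zeros `s n` of `t + α n t * (α n)' t`
tending to `0`: one has `γ̂ n (s n) → (0,0,0)`, `‖γ n ' (s n)‖ → 1` and
`‖γ̂ n ' (s n)‖ → ∞`. -/
theorem stmt_8 (r : ℝ) (hr : 0 < r) (α β : ℕ → ℂ → ℂ)
    (hα : ∀ n, DifferentiableOn ℂ (α n) (ball (0 : ℂ) r))
    (hβ : ∀ n, DifferentiableOn ℂ (β n) (ball (0 : ℂ) r))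
    (hαconv : TendstoLocallyUniformlyOn α (fun _ => 0) atTop (ball (0 : ℂ) r))
    (hβconv : TendstoLocallyUniformlyOn β (fun _ => 0) atTop (ball (0 : ℂ) r))
    (hαne : ∀ n, ∀ t ∈ ball (0 : ℂ) r, α n t ≠ 0)
    (s : ℕ → ℂ) (hs : ∀ n, s n ∈ ball (0 : ℂ) r)
    (hzero : ∀ n, s n + α n (s n) * deriv (α n) (s n) = 0)
    (hslim : Tendsto s atTop (nhds 0))
    (γ γhat : ℕ → ℂ → ℂ × ℂ × ℂ)
    (hγ : ∀ n t, γ n t = (t, α n t, β n t))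
    (hγhat : ∀ n t, γhat n t = (t / α n t, α n t, β n t)) :
    Tendsto (fun n => γhat n (s n)) atTop (nhds ((0 : ℂ), (0 : ℂ), (0 : ℂ))) ∧
    Tendsto (fun n => ‖deriv (γ n) (s n)‖) atTop (nhds 1) ∧
    Tendsto (fun n => ‖deriv (γhat n) (s n)‖) atTop atTop := by
  have h0mem : (0 : ℂ) ∈ ball (0 : ℂ) r := mem_ball_self hr
  have hsw : Tendsto s atTop (nhdsWithin 0 (ball (0 : ℂ) r)) :=
    tendsto_nhdsWithin_of_tendsto_nhds_of_eventually_within s hslim (Eventually.of_forall hs)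
  -- α n (s n) → 0, β n (s n) → 0
  have hαs : Tendsto (fun n => α n (s n)) atTop (nhds 0) := by
    simpa using hαconv.tendsto_comp continuousWithinAt_const h0mem hsw
  have hβs : Tendsto (fun n => β n (s n)) atTop (nhds 0) := by
    simpa using hβconv.tendsto_comp continuousWithinAt_const h0mem hsw
  -- derivatives converge to 0
  have hαdconv := hαconv.deriv (Eventually.of_forall hα) isOpen_ball
  have hβdconv := hβconv.deriv (Eventually.of_forall hβ) isOpen_ball
  have hzf : (deriv (fun _ : ℂ => (0 : ℂ))) = fun _ => (0 : ℂ) := by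
    funext x; simp
  rw [hzf] at hαdconv hβdconv
  have hαd : Tendsto (fun n => deriv (α n) (s n)) atTop (nhds 0) := by
    simpa using hαdconv.tendsto_comp continuousWithinAt_const h0mem hsw
  have hβd : Tendsto (fun n => deriv (β n) (s n)) atTop (nhds 0) := by
    simpa using hβdconv.tendsto_comp continuousWithinAt_const h0mem hsw
  -- differentiability at the points
  have hαdA : ∀ n, HasDerivAt (α n) (deriv (α n) (s n)) (s n) := fun n =>
    ((hα n).differentiableAt (isOpen_ball.mem_nhds (hs n))).hasDerivAt
  have hβdA : ∀ n, HasDerivAt (β n) (deriv (β n) (s n)) (s n) := fun n =>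
    ((hβ n).differentiableAt (isOpen_ball.mem_nhds (hs n))).hasDerivAt
  have hne : ∀ n, α n (s n) ≠ 0 := fun n => hαne n _ (hs n)
  have hsn : ∀ n, s n = -(α n (s n) * deriv (α n) (s n)) := fun n => by
    linear_combination hzero n
  have hdiv : ∀ n, s n / α n (s n) = -deriv (α n) (s n) := fun n => by
    rw [div_eq_iff (hne n)]
    linear_combination hzero n
  -- Part 1
  have h1 : Tendsto (fun n => γhat n (s n)) atTop
      (nhds ((0 : ℂ), (0 : ℂ), (0 : ℂ))) := by
    simp only [hγhat, hdiv]
    exact (hαd.neg.congr' (by simp)).prodMk_nhds (hαs.prodMk_nhds hβs) |>.congr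
      (fun n => rfl) |>.mono_right (by simp)
  -- derivative of γ
  have hγd : ∀ n, deriv (γ n) (s n) =
      (1, deriv (α n) (s n), deriv (β n) (s n)) := fun n => by
    have hfun : γ n = fun t => (t, α n t, β n t) := funext (hγ n)
    have h : HasDerivAt (γ n) (1, deriv (α n) (s n), deriv (β n) (s n)) (s n) := by
      rw [hfun]
      exact (hasDerivAt_id (s n)).prodMk ((hαdA n).prodMk (hβdA n))
    exact h.deriv
  have h2 : Tendsto (fun n => ‖deriv (γ n) (s n)‖) atTop (nhds 1) := by
    simp only [hγd]
    have ht : Tendsto (fun n => ((1 : ℂ), deriv (α n) (s n), deriv (β n) (s n)))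
        atTop (nhds (1, 0, 0)) :=
      tendsto_const_nhds.prodMk_nhds (hαd.prodMk_nhds hβd)
    have := ht.norm
    simpa [Prod.norm_def] using this
  -- derivative of γhat
  have hγhatd : ∀ n, deriv (γhat n) (s n) =
      ((1 + (deriv (α n) (s n)) ^ 2) / α n (s n),
        deriv (α n) (s n), deriv (β n) (s n)) := fun n => by
    have hfun : γhat n = fun t => (t / α n t, α n t, β n t) := funext (hγhat n)
    have hD : HasDerivAt (fun t => t / α n t)
        ((1 * α n (s n) - s n * deriv (α n) (s n)) / α n (s n) ^ 2) (s n) :=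
      (hasDerivAt_id (s n)).div (hαdA n) (hne n)
    have hval : (1 * α n (s n) - s n * deriv (α n) (s n)) / α n (s n) ^ 2
        = (1 + (deriv (α n) (s n)) ^ 2) / α n (s n) := by
      rw [div_eq_div_iff (pow_ne_zero 2 (hne n)) (hne n)]
      linear_combination (-(deriv (α n) (s n)) * α n (s n)) * hzero n
    rw [hval] at hD
    have h : HasDerivAt (γhat n)
        ((1 + (deriv (α n) (s n)) ^ 2) / α n (s n),
          deriv (α n) (s n), deriv (β n) (s n)) (s n) := by
      rw [hfun]
      exact hD.prodMk ((hαdA n).prodMk (hβdA n))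
    exact h.deriv
  -- Part 3
  have hnum : Tendsto (fun n => ‖(1 : ℂ) + (deriv (α n) (s n)) ^ 2‖) atTop (nhds 1) := by
    have ht : Tendsto (fun n => (1 : ℂ) + (deriv (α n) (s n)) ^ 2) atTop (nhds 1) := by
      simpa using tendsto_const_nhds.add (hαd.pow 2)
    simpa using ht.norm
  have hden : Tendsto (fun n => ‖α n (s n)‖⁻¹) atTop atTop := by
    refine Filter.Tendsto.inv_tendsto_nhdsGT_zero ?_
    exact tendsto_nhdsWithin_of_tendsto_nhds_of_eventually_within _ (by simpa using hαs.norm)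
      (Eventually.of_forall fun n => norm_pos_iff.mpr (hne n))
  have hDlim : Tendsto
      (fun n => ‖((1 : ℂ) + (deriv (α n) (s n)) ^ 2) / α n (s n)‖) atTop atTop := by
    simp only [norm_div]
    simp only [div_eq_mul_inv]
    exact hnum.pos_mul_atTop one_pos hden
  have h3 : Tendsto (fun n => ‖deriv (γhat n) (s n)‖) atTop atTop := by
    refine tendsto_atTop_mono (fun n => ?_) hDlim
    rw [hγhatd n, Prod.norm_def]
    exact le_max_left _ _
  exact ⟨h1, h2, h3⟩
end
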